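/- Let γ > 0 and let {A_i : i ∈ I} be a family of closed convex subsets of a Banach space X with A := ⋂_i A_i ≠ ∅. Then the condition 'for all x ∈ A, N(A, x) ∩ B_{X*} ⊆ cl^{w*}co(⋃_i (N(A_i, x) ∩ γ·B_{X*}))' holds if and only if {A_i} has the CHIP (N(A, x) equals the weak* closure of Σ_i N(A_i, x) for all x ∈ A) and for every x ∈ A the family {N(A_i, x) : i ∈ I} has property (G_{1/γ}). -/

import Mathlib

open Set Metric
open scoped Pointwise

noncomputable section

/-- The recession cone `0⁺A = {x | A + t • x ⊆ A for all t ≥ 0}`. -/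
def recCone {X : Type*} [AddCommGroup X] [Module ℝ X] (A : Set X) : Set X :=
  {x | ∀ t : ℝ, 0 ≤ t → ∀ a ∈ A, a + t • x ∈ A}

/-- The inverse sum `B₁ # B₂`. -/
def invSum {X : Type*} [AddCommGroup X] [Module ℝ X] (B₁ B₂ : Set X) : Set X :=
  (⋃ t ∈ Set.Ioo (0:ℝ) 1, (t • B₁ ∩ (1 - t) • B₂)) ∪ (B₁ ∩ recCone B₂) ∪ (B₂ ∩ recCone B₁)

/-- The polar `A° = {x* | ⟨x*, x⟩ ≤ 1 ∀ x ∈ A}` of a set in `X`, a subset of the dual. -/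
def pol {X : Type*} [NormedAddCommGroup X] [NormedSpace ℝ X] (A : Set X) :
    Set (X →L[ℝ] ℝ) := {f | ∀ x ∈ A, f x ≤ 1}

/-- The dual cone (negative polar) `A^⊖ = {x* | ⟨x*, x⟩ ≤ 0 ∀ x ∈ A}`. -/
def dCone {X : Type*} [NormedAddCommGroup X] [NormedSpace ℝ X] (A : Set X) :
    Set (X →L[ℝ] ℝ) := {f | ∀ x ∈ A, f x ≤ 0}

/-- The weak* closure of a set of continuous linear functionals. -/
def wcl {X : Type*} [NormedAddCommGroup X] [NormedSpace ℝ X]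
    (S : Set (X →L[ℝ] ℝ)) : Set (X →L[ℝ] ℝ) :=
  {f | StrongDual.toWeakDual (𝕜 := ℝ) (E := X) f ∈
    closure (StrongDual.toWeakDual (𝕜 := ℝ) (E := X) '' S)}

/-- The set of all finite sums `Σ_{i ∈ I₀} x_i` with `x_i ∈ P i`, `I₀ ⊆ I` finite. -/
def finSums {X : Type*} [NormedAddCommGroup X] [NormedSpace ℝ X] {I : Type*}
    (P : I → Set (X →L[ℝ] ℝ)) : Set (X →L[ℝ] ℝ) :=
  {g | ∃ (s : Finset I) (x : I → (X →L[ℝ] ℝ)), (∀ i ∈ s, x i ∈ P i) ∧ g = ∑ i ∈ s, x i}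

/-- The extended Jameson property `(G_η)`: every `f` in the weak* closure of the set of
finite sums of the `P i` is a weak* limit (i.e. lies in the weak* closure) of finite sums
`Σ_{i ∈ s} x_i`, `x_i ∈ P i`, with `Σ_{i ∈ s} ‖x_i‖ ≤ (1/η) ‖f‖`. -/
def propG {X : Type*} [NormedAddCommGroup X] [NormedSpace ℝ X] {I : Type*}
    (P : I → Set (X →L[ℝ] ℝ)) (η : ℝ) : Prop :=
  ∀ f ∈ wcl (finSums P),
    f ∈ wcl {g | ∃ (s : Finset I) (x : I → (X →L[ℝ] ℝ)),
      (∀ i ∈ s, x i ∈ P i) ∧ g = ∑ i ∈ s, x i ∧ ∑ i ∈ s, ‖x i‖ ≤ (1 / η) * ‖f‖}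

/-- The normal cone `N(C, x) = {x* | ⟨x*, c − x⟩ ≤ 0 ∀ c ∈ C}`. -/
def ncone {X : Type*} [NormedAddCommGroup X] [NormedSpace ℝ X] (C : Set X) (x : X) :
    Set (X →L[ℝ] ℝ) := {f | ∀ c ∈ C, f (c - x) ≤ 0}

/-- The conical hull of a convex set `S`: `cone S = {t • s | t ≥ 0, s ∈ S}`. -/
def coneHull {X : Type*} [AddCommGroup X] [Module ℝ X] (S : Set X) : Set X :=
  {y | ∃ t : ℝ, 0 ≤ t ∧ ∃ s ∈ S, y = t • s}

end

/-!
For cones `N i`, the convex hull of `⋃ i, N i ∩ γ B` is exactly the set of finite sums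
`Σ x_i` with `x_i ∈ N i` and `Σ ‖x_i‖ ≤ γ`. By positive homogeneity, the inclusion
`N(A, x) ∩ B ⊆ cl^{w*}co(…)` therefore says that every `f ∈ N(A, x)` is a weak* limit of such
sums with `Σ ‖x_i‖ ≤ γ ‖f‖`. This is property `(G_{1/γ})` once `N(A, x)` is known to be the
weak* closure of `Σ_i N(A_i, x)`, and it forces that equality, because every finite sum of the
`N(A_i, x)` lies in the weak*-closed cone `N(A, x)`.
-/

open Finset

section BoundedSums

variable {E : Type*} [NormedAddCommGroup E] {I : Type*}

def boundedSums (P : I → Set E) (β : ℝ) : Set E :=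
  {g | ∃ (s : Finset I) (x : I → E),
    (∀ i ∈ s, x i ∈ P i) ∧ g = ∑ i ∈ s, x i ∧ ∑ i ∈ s, ‖x i‖ ≤ β}

theorem zero_mem_boundedSums (P : I → Set E) {β : ℝ} (hβ : 0 ≤ β) : (0 : E) ∈ boundedSums P β :=
  ⟨∅, 0, by simp, by simp, by simpa using hβ⟩

theorem boundedSums_mono (P : I → Set E) {β β' : ℝ} (h : β ≤ β') :
    boundedSums P β ⊆ boundedSums P β' := by
  rintro g ⟨s, x, hx, hg, hβ⟩
  exact ⟨s, x, hx, hg, hβ.trans h⟩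

variable [NormedSpace ℝ E] {N : I → PointedCone ℝ E}

theorem smul_boundedSums_subset {c : ℝ} (hc : 0 ≤ c) (β : ℝ) :
    c • boundedSums (fun i => (N i : Set E)) β ⊆
      boundedSums (fun i => (N i : Set E)) (c * β) := by
  rintro _ ⟨g, ⟨s, x, hx, rfl, hβ⟩, rfl⟩
  refine ⟨s, fun i => c • x i, fun i hi => (N i).smul_mem hc (hx i hi), smul_sum, ?_⟩
  simp only [norm_smul_of_nonneg hc, ← mul_sum]
  gcongr

theorem convex_boundedSums (β : ℝ) : Convex ℝ (boundedSums (fun i => (N i : Set E)) β) := by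
  classical
  rintro _ ⟨s, x, hx, rfl, hxβ⟩ _ ⟨t, y, hy, rfl, hyβ⟩ a b ha hb hab
  -- extend both representations by zero to the common index set `s ∪ t`
  have indicator_mem (u : Finset I) (z : I → E) (hz : ∀ i ∈ u, z i ∈ N i) (i : I) :
      (u : Set I).indicator z i ∈ N i := by
    by_cases hi : i ∈ u
    · simpa [hi] using hz i hi
    · simp [hi]
  set x' := (s : Set I).indicator x
  set y' := (t : Set I).indicator y
  have hx' : ∀ i, x' i ∈ N i := indicator_mem s x hx
  have hy' : ∀ i, y' i ∈ N i := indicator_mem t y hy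
  refine ⟨s ∪ t, fun i => a • x' i + b • y' i,
    fun i _ => add_mem ((N i).smul_mem ha (hx' i)) ((N i).smul_mem hb (hy' i)), ?_, ?_⟩
  · rw [sum_add_distrib, ← smul_sum, ← smul_sum, sum_indicator_subset _ subset_union_left,
      sum_indicator_subset _ subset_union_right]
  · calc ∑ i ∈ s ∪ t, ‖a • x' i + b • y' i‖
        ≤ ∑ i ∈ s ∪ t, (a * ‖x' i‖ + b * ‖y' i‖) := sum_le_sum fun i _ =>
          (norm_add_le _ _).trans_eq (by rw [norm_smul_of_nonneg ha, norm_smul_of_nonneg hb])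
      _ = a * ∑ i ∈ s, ‖x i‖ + b * ∑ i ∈ t, ‖y i‖ := by
          simp only [x', y', norm_indicator_eq_indicator_norm]
          rw [sum_add_distrib, ← mul_sum, ← mul_sum, sum_indicator_subset _ subset_union_left,
            sum_indicator_subset _ subset_union_right]
      _ ≤ a * β + b * β := by gcongr
      _ = β := by rw [← add_mul, hab, one_mul]

theorem convexHull_iUnion_inter_closedBall [Nonempty I] {γ : ℝ} (hγ : 0 ≤ γ) :
    convexHull ℝ (⋃ i, (N i : Set E) ∩ closedBall 0 γ) =
      boundedSums (fun i => (N i : Set E)) γ := by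
  refine (convexHull_min ?_ (convex_boundedSums γ)).antisymm ?_
  · rintro g ⟨_, ⟨i, rfl⟩, hgN, hgB⟩
    refine ⟨{i}, fun _ => g, by simpa using hgN, by simp, ?_⟩
    simpa using hgB
  rintro _ ⟨s, x, hx, rfl, hxγ⟩
  set T := ∑ i ∈ s, ‖x i‖
  rcases (sum_nonneg fun i _ => norm_nonneg (x i) : 0 ≤ T).eq_or_lt with hT | hT
  · have hx0 : ∀ i ∈ s, x i = 0 := fun i hi =>
      norm_eq_zero.1 ((sum_eq_zero_iff_of_nonneg fun i _ => norm_nonneg (x i)).1 hT.symm i hi)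
    rw [sum_eq_zero hx0]
    obtain ⟨i⟩ := ‹Nonempty I›
    exact subset_convexHull ℝ _ (mem_iUnion.2 ⟨i, zero_mem _, mem_closedBall_self hγ⟩)
  -- a convex combination, with weights `‖x i‖ / T`, of the points `(T / ‖x i‖) • x i` of norm `T`
  have hcomb : ∀ i ∈ s, (‖x i‖ / T) • (T / ‖x i‖) • x i = x i := fun i _ => by
    by_cases hxi : x i = 0
    · simp [hxi]
    · rw [smul_smul, div_mul_div_cancel₀ hT.ne', div_self (norm_ne_zero_iff.2 hxi), one_smul]
  rw [← sum_congr rfl hcomb]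
  refine (convex_convexHull ℝ _).sum_mem (fun i _ => by positivity)
    (by rw [← sum_div, div_self hT.ne']) fun i hi => subset_convexHull ℝ _ (mem_iUnion.2 ⟨i,
      (N i).smul_mem (by positivity) (hx i hi), ?_⟩)
  rw [mem_closedBall_zero_iff, norm_smul_of_nonneg (by positivity), div_mul_eq_mul_div]
  exact (div_le_of_le_mul₀ (norm_nonneg _) hT.le le_rfl).trans hxγ

end BoundedSums

section WeakStarClosure

variable {X : Type*} [NormedAddCommGroup X] [NormedSpace ℝ X]

theorem mem_wcl {S : Set (X →L[ℝ] ℝ)} {f : X →L[ℝ] ℝ} :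
    f ∈ wcl S ↔ StrongDual.toWeakDual f ∈ closure (StrongDual.toWeakDual '' S) :=
  Iff.rfl

theorem subset_wcl (S : Set (X →L[ℝ] ℝ)) : S ⊆ wcl S :=
  fun f hf => mem_wcl.2 (subset_closure ⟨f, hf, rfl⟩)

theorem wcl_mono {S T : Set (X →L[ℝ] ℝ)} (h : S ⊆ T) : wcl S ⊆ wcl T :=
  fun _ hf => mem_wcl.2 (closure_mono (image_mono h) (mem_wcl.1 hf))

theorem smul_mem_wcl {S : Set (X →L[ℝ] ℝ)} {f : X →L[ℝ] ℝ} (c : ℝ) (hf : f ∈ wcl S) :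
    c • f ∈ wcl (c • S) := by
  rw [mem_wcl] at hf ⊢
  refine map_mem_closure (f := fun φ : WeakDual ℝ X => c • φ) (continuous_const_smul c) hf ?_
  rintro _ ⟨g, hg, rfl⟩
  exact ⟨c • g, smul_mem_smul_set hg, rfl⟩

theorem wcl_ncone_subset (C : Set X) (x : X) : wcl (ncone C x) ⊆ ncone C x := by
  intro f hf c hc
  rw [mem_wcl] at hf
  have hclosed : IsClosed {φ : WeakDual ℝ X | φ (c - x) ≤ 0} :=
    isClosed_le (WeakDual.eval_continuous (c - x)) continuous_const
  exact hclosed.closure_subset_iff.2 (by rintro _ ⟨g, hg, rfl⟩; exact hg c hc) hf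

def nconePointedCone (C : Set X) (x : X) : PointedCone ℝ (X →L[ℝ] ℝ) where
  carrier := ncone C x
  zero_mem' c _ := by simp
  add_mem' hf hg c hc := by simpa using add_nonpos (hf c hc) (hg c hc)
  smul_mem' t f hf c hc := mul_nonpos_of_nonneg_of_nonpos t.2 (hf c hc)

theorem finSums_ncone_subset_ncone_iInter {I : Type*} (A : I → Set X) (x : X) :
    finSums (fun i => ncone (A i) x) ⊆ ncone (⋂ i, A i) x := by
  rintro _ ⟨s, y, hy, rfl⟩
  exact (nconePointedCone (⋂ i, A i) x).sum_mem fun i hi c hc => hy i hi c (mem_iInter.1 hc i)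

theorem boundedSums_subset_finSums {I : Type*} (P : I → Set (X →L[ℝ] ℝ)) (β : ℝ) :
    boundedSums P β ⊆ finSums P := by
  rintro g ⟨s, x, hx, hg, -⟩
  exact ⟨s, x, hx, hg⟩

theorem propG_iff {I : Type*} (P : I → Set (X →L[ℝ] ℝ)) (η : ℝ) :
    propG P η ↔ ∀ f ∈ wcl (finSums P), f ∈ wcl (boundedSums P (1 / η * ‖f‖)) :=
  Iff.rfl

end WeakStarClosure

section NormalCones

variable {X : Type*} [NormedAddCommGroup X] [NormedSpace ℝ X] {I : Type*}
  {N : I → PointedCone ℝ (X →L[ℝ] ℝ)}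

theorem inter_closedBall_subset_wcl_boundedSums_iff (K : PointedCone ℝ (X →L[ℝ] ℝ)) {γ : ℝ}
    (hγ : 0 ≤ γ) :
    (K : Set (X →L[ℝ] ℝ)) ∩ closedBall 0 1 ⊆
        wcl (boundedSums (fun i => (N i : Set (X →L[ℝ] ℝ))) γ) ↔
      ∀ f ∈ K, f ∈ wcl (boundedSums (fun i => (N i : Set (X →L[ℝ] ℝ))) (γ * ‖f‖)) := by
  constructor
  · intro h f hf
    rcases eq_or_ne f 0 with rfl | hf0
    · exact subset_wcl _ (zero_mem_boundedSums _ (by simp))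
    have hnorm : ‖f‖ ≠ 0 := norm_ne_zero_iff.2 hf0
    have hunit : ‖f‖⁻¹ • f ∈ (K : Set (X →L[ℝ] ℝ)) ∩ closedBall 0 1 :=
      ⟨K.smul_mem (by positivity) hf, mem_closedBall_zero_iff.2 (norm_smul_inv_norm hf0).le⟩
    have hf' := smul_mem_wcl ‖f‖ (h hunit)
    rw [smul_inv_smul₀ hnorm] at hf'
    rw [mul_comm]
    exact wcl_mono (smul_boundedSums_subset (norm_nonneg f) γ) hf'
  · rintro h f ⟨hfK, hfB⟩
    have hfγ : γ * ‖f‖ ≤ γ := mul_le_of_le_one_right hγ (mem_closedBall_zero_iff.1 hfB)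
    exact wcl_mono (boundedSums_mono _ hfγ) (h f hfK)

theorem inter_closedBall_subset_wcl_convexHull_iff [Nonempty I] {γ : ℝ} (hγ : 0 ≤ γ)
    (K : PointedCone ℝ (X →L[ℝ] ℝ)) (hK : wcl K ⊆ (K : Set (X →L[ℝ] ℝ)))
    (hNK : finSums (fun i => (N i : Set (X →L[ℝ] ℝ))) ⊆ K) :
    (K : Set (X →L[ℝ] ℝ)) ∩ closedBall 0 1 ⊆
        wcl (convexHull ℝ (⋃ i, (N i : Set (X →L[ℝ] ℝ)) ∩ γ • closedBall 0 1)) ↔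
      (K : Set (X →L[ℝ] ℝ)) = wcl (finSums fun i => (N i : Set (X →L[ℝ] ℝ))) ∧
        propG (fun i => (N i : Set (X →L[ℝ] ℝ))) (1 / γ) := by
  rw [smul_unitClosedBall_of_nonneg hγ, convexHull_iUnion_inter_closedBall hγ,
    inter_closedBall_subset_wcl_boundedSums_iff K hγ, propG_iff, one_div_one_div]
  constructor
  · intro h
    have hchip : (K : Set (X →L[ℝ] ℝ)) = wcl (finSums fun i => (N i : Set (X →L[ℝ] ℝ))) :=
      Subset.antisymm (fun f hf => wcl_mono (boundedSums_subset_finSums _ _) (h f hf))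
        ((wcl_mono hNK).trans hK)
    exact ⟨hchip, fun f hf => h f (hchip.symm.subset hf)⟩
  · rintro ⟨hchip, hG⟩ f hf
    exact hG f (hchip.subset hf)

end NormalCones

theorem stmt19_general {X : Type*} [NormedAddCommGroup X] [NormedSpace ℝ X]
    {I : Type*} [Nonempty I] (γ : ℝ) (hγ : 0 < γ) (A : I → Set X) :
    (∀ x ∈ ⋂ i, A i,
        ncone (⋂ i, A i) x ∩ closedBall (0 : X →L[ℝ] ℝ) 1 ⊆
          wcl (convexHull ℝ
            (⋃ i, ncone (A i) x ∩ γ • closedBall (0 : X →L[ℝ] ℝ) 1))) ↔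
      ((∀ x ∈ ⋂ i, A i,
          ncone (⋂ i, A i) x = wcl (finSums (fun i => ncone (A i) x))) ∧
        ∀ x ∈ ⋂ i, A i, propG (fun i => ncone (A i) x) (1 / γ)) := by
  rw [← forall₂_and]
  exact forall₂_congr fun x _ =>
    inter_closedBall_subset_wcl_convexHull_iff (N := fun i => nconePointedCone (A i) x) hγ.le
      (nconePointedCone (⋂ i, A i) x) (wcl_ncone_subset _ x)
      (finSums_ncone_subset_ncone_iInter A x)

theorem stmt19 {X : Type*} [NormedAddCommGroup X] [NormedSpace ℝ X] [CompleteSpace X]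
    {I : Type*} [Nonempty I] (γ : ℝ) (hγ : 0 < γ) (A : I → Set X)
    (hcl : ∀ i, IsClosed (A i)) (hconv : ∀ i, Convex ℝ (A i))
    (hne : (⋂ i, A i).Nonempty) :
    (∀ x ∈ ⋂ i, A i,
        ncone (⋂ i, A i) x ∩ closedBall (0 : X →L[ℝ] ℝ) 1 ⊆
          wcl (convexHull ℝ
            (⋃ i, ncone (A i) x ∩ γ • closedBall (0 : X →L[ℝ] ℝ) 1))) ↔
      ((∀ x ∈ ⋂ i, A i,
          ncone (⋂ i, A i) x = wcl (finSums (fun i => ncone (A i) x))) ∧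
        ∀ x ∈ ⋂ i, A i, propG (fun i => ncone (A i) x) (1 / γ)) :=
  stmt19_general γ hγ A
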